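/- Let L be a field of characteristic 0 and n ≥ 1. Define y_i = -x_i - n/2 for 1 ≤ i ≤ n and y_{i+n} = x_{i+n} + n/2 for 1 ≤ i ≤ n in the polynomial ring L[x_1,…,x_{2n}]. Let E : L[x_1,…,x_{2n}]^{S_{2n}} → L[x_1,…,x_{2n}] be the algebra map sending the k-th power sum p_k(x) = Σ_{i=1}^{2n} x_i^k to m_k = Σ_{i=1}^{2n} y_i^k, and let E_a be the algebra map sending p_k to m_k^a = Σ_{i=1}^{n}(y_i - 1)^k + Σ_{i=1}^{n}(y_{i+n} + 1)^k. Then the L-subalgebra of L[x_1,…,x_{2n}] generated by the images of E and E_a contains all polynomials q_j = Σ_{i=1}^n y_i^j and r_j = Σ_{i=1}^n y_{i+n}^j for j ≥ 1; in particular it equals the ring of polynomials invariant under the subgroup S_n × S_n permuting {x_1,…,x_n} and {x_{n+1},…,x_{2n}} separately. -/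

import Mathlib

/-!
Over a `ℚ`-algebra the power sums generate the symmetric polynomials (Newton's identities), so the
algebra generated by the images of `E` and `E_a` is generated by the `m_k` and `m_k^a`. Since
`m_k = q_k + r_k` and the binomial expansion of `m_{k+1}^a` has top terms `q_{k+1} + r_{k+1}` and
`(k + 1) (r_k - q_k)`, induction on `k` shows that this algebra is generated by the `q_k` and `r_k`.

The `S_n × S_n`-invariants are generated by the power sums of the two blocks of variables: view
`L[x]` as polynomials in the first block with coefficients in polynomials in the second one, whose
coefficients are then symmetric, and use the symmetric case twice. The substitution `x ↦ y` is an
automorphism commuting with block-preserving permutations, which carries this onto the `q_k, r_k`.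
-/

open MvPolynomial Finset

theorem Subalgebra.mem_of_nsmul_mem {R A : Type*} [CommRing R] [Algebra ℚ R] [Ring A]
    [Algebra R A] (S : Subalgebra R A) {k : ℕ} (hk : k ≠ 0) {x : A} (hx : k • x ∈ S) :
    x ∈ S := by
  have hx' : x = algebraMap ℚ R (k : ℚ)⁻¹ • k • x := by
    rw [← Nat.cast_smul_eq_nsmul R, smul_smul, ← map_natCast (algebraMap ℚ R), ← map_mul,
      inv_mul_cancel₀ (Nat.cast_ne_zero.mpr hk), map_one, one_smul]
  rw [hx']
  exact S.smul_mem hx _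

theorem Finset.sum_add_pow_eq_sum_range {R ι : Type*} [CommSemiring R] (s : Finset ι)
    (f : ι → R) (a : R) (k : ℕ) :
    ∑ i ∈ s, (f i + a) ^ k =
      ∑ j ∈ range (k + 1), (∑ i ∈ s, f i ^ j) * a ^ (k - j) * k.choose j := by
  simp_rw [add_pow, Finset.sum_mul]
  exact Finset.sum_comm

theorem Finset.sum_filter_comp_perm {ι M : Type*} [Fintype ι] [AddCommMonoid M] (P : ι → Prop)
    [DecidablePred P] {σ : Equiv.Perm ι} (hσ : ∀ i, P i ↔ P (σ i)) (f : ι → M) :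
    ∑ i ∈ univ.filter P, f (σ i) = ∑ i ∈ univ.filter P, f i :=
  Finset.sum_equiv σ (fun i => by simp [hσ i]) (fun _ _ => rfl)

section Binomial

variable {R B : Type*} [CommRing R] [Algebra ℚ R] [CommRing B] [Algebra R B]

theorem Subalgebra.mem_and_mem_of_add_mem_of_binomial_mem (A : Subalgebra R B) {q r : ℕ → B}
    (hsum : ∀ k, q k + r k ∈ A)
    (hbinom : ∀ k, ∑ j ∈ range (k + 1), (q j * (-1) ^ (k - j) + r j) * k.choose j ∈ A)
    (k : ℕ) : q k ∈ A ∧ r k ∈ A := by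
  induction k using Nat.strong_induction_on with
  | _ k ih =>
  have hdiff : (k + 1) • (r k - q k) ∈ A := by
    have h := A.sub_mem (A.sub_mem (hbinom (k + 1)) (hsum (k + 1))) <|
      A.sum_mem (t := range k) fun j hj => A.mul_mem (A.add_mem
        (A.mul_mem (ih j (mem_range.mp hj)).1 (A.pow_mem (A.neg_mem A.one_mem) (k + 1 - j)))
        (ih j (mem_range.mp hj)).2) (A.natCast_mem ((k + 1).choose j))
    convert h using 1
    rw [sum_range_succ, sum_range_succ, nsmul_eq_mul]
    simp [Nat.choose_succ_self_right]
    ring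
  have hrq : r k - q k ∈ A := A.mem_of_nsmul_mem k.succ_ne_zero hdiff
  have hq : 2 • q k ∈ A := by
    convert A.sub_mem (hsum k) hrq using 1
    rw [two_nsmul]; ring
  have hr : 2 • r k ∈ A := by
    convert A.add_mem (hsum k) hrq using 1
    rw [two_nsmul]; ring
  exact ⟨A.mem_of_nsmul_mem two_ne_zero hq, A.mem_of_nsmul_mem two_ne_zero hr⟩

theorem Algebra.adjoin_range_add_union_range_binomial (q r : ℕ → B) :
    Algebra.adjoin R (Set.range (fun k => q k + r k) ∪
      Set.range (fun k => ∑ j ∈ range (k + 1), (q j * (-1) ^ (k - j) + r j) * k.choose j)) =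
      Algebra.adjoin R (Set.range q ∪ Set.range r) := by
  set A := Algebra.adjoin R (Set.range q ∪ Set.range r)
  have hq : ∀ k, q k ∈ A := fun k => Algebra.subset_adjoin (Or.inl ⟨k, rfl⟩)
  have hr : ∀ k, r k ∈ A := fun k => Algebra.subset_adjoin (Or.inr ⟨k, rfl⟩)
  refine le_antisymm (Algebra.adjoin_le ?_) (Algebra.adjoin_le ?_)
  · rintro _ (⟨k, rfl⟩ | ⟨k, rfl⟩)
    · exact A.add_mem (hq k) (hr k)
    · exact A.sum_mem fun j _ => A.mul_mem (A.add_mem (A.mul_mem (hq j)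
        (A.pow_mem (A.neg_mem A.one_mem) _)) (hr j)) (A.natCast_mem _)
  · have h := Subalgebra.mem_and_mem_of_add_mem_of_binomial_mem
      (Algebra.adjoin R (Set.range (fun k => q k + r k) ∪
        Set.range (fun k => ∑ j ∈ range (k + 1), (q j * (-1) ^ (k - j) + r j) * k.choose j)))
      (fun k => Algebra.subset_adjoin (Or.inl ⟨k, rfl⟩))
      (fun k => Algebra.subset_adjoin (Or.inr ⟨k, rfl⟩))
    rintro _ (⟨k, rfl⟩ | ⟨k, rfl⟩)
    exacts [(h k).1, (h k).2]

end Binomial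

namespace MvPolynomial

variable {σ R : Type*}

section RatAlgebra

variable [Fintype σ] [CommRing R] [Algebra ℚ R]

theorem esymm_mem_adjoin_range_psum (k : ℕ) :
    esymm σ R k ∈ Algebra.adjoin R (Set.range (psum σ R)) := by
  set S := Algebra.adjoin R (Set.range (psum σ R))
  induction k using Nat.strong_induction_on with
  | _ k ih =>
  rcases Nat.eq_zero_or_pos k with rfl | hk
  · simpa only [esymm_zero] using S.one_mem
  have hsum : (-1) ^ (k + 1) *
      ∑ a ∈ antidiagonal k with a.1 < k, (-1) ^ a.1 * esymm σ R a.1 * psum σ R a.2 ∈ S :=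
    S.mul_mem (S.pow_mem (S.neg_mem S.one_mem) _) <| S.sum_mem fun a ha =>
      S.mul_mem (S.mul_mem (S.pow_mem (S.neg_mem S.one_mem) _) (ih _ (mem_filter.mp ha).2))
        (Algebra.subset_adjoin ⟨a.2, rfl⟩)
  rw [← mul_esymm_eq_sum, ← nsmul_eq_mul] at hsum
  exact S.mem_of_nsmul_mem hk.ne' hsum

theorem symmetricSubalgebra_eq_adjoin_range_psum :
    symmetricSubalgebra σ R = Algebra.adjoin R (Set.range (psum σ R)) := by
  refine le_antisymm (fun p hp => ?_) (Algebra.adjoin_le ?_)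
  · obtain ⟨g, hg⟩ := esymmAlgHom_surjective R le_rfl ⟨p, hp⟩
    have hpg : p = aeval (fun i : Fin (Fintype.card σ) ↦ esymm σ R (i + 1)) g := by
      rw [← esymmAlgHom_apply, hg]
    have hmem : p ∈ Algebra.adjoin R
        (Set.range fun i : Fin (Fintype.card σ) ↦ esymm σ R (i + 1)) := by
      rw [Algebra.adjoin_range_eq_range_aeval, hpg]
      exact ⟨g, rfl⟩
    exact Algebra.adjoin_le (Set.range_subset_iff.mpr fun i => esymm_mem_adjoin_range_psum _) hmem
  · rintro _ ⟨k, rfl⟩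
    exact psum_isSymmetric σ R k

theorem adjoin_image_symmetricSubalgebra {B : Type*} [Semiring B] [Algebra R B]
    (f : MvPolynomial σ R →ₐ[R] B) :
    Algebra.adjoin R (f '' symmetricSubalgebra σ R) =
      Algebra.adjoin R (Set.range fun k => f (psum σ R k)) := by
  rw [symmetricSubalgebra_eq_adjoin_range_psum, Algebra.adjoin_image, Algebra.adjoin_eq,
    ← Algebra.adjoin_image, ← Set.range_comp]
  rfl

end RatAlgebra

theorem map_psum [Fintype σ] [CommSemiring R] {S : Type*} [CommSemiring S] (f : R →+* S)
    (k : ℕ) : map f (psum σ R k) = psum σ S k := by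
  simp [psum]

theorem C_mem_adjoin_C_image {K : Type*} [CommSemiring K] [CommSemiring R] [Algebra K R]
    {T : Set R} {s : R} (hs : s ∈ Algebra.adjoin K T) :
    (C s : MvPolynomial σ R) ∈ Algebra.adjoin K (C '' T) := by
  rw [show (C : R → MvPolynomial σ R) = IsScalarTower.toAlgHom K R (MvPolynomial σ R) from rfl,
    Algebra.adjoin_image]
  exact Subalgebra.mem_map.mpr ⟨s, hs, rfl⟩

theorem mem_adjoin_C_image_union_range_psum_of_isSymmetric [Fintype σ] [CommRing R] {K : Type*}
    [Field K] [CharZero K] [Algebra K R] {T : Set R} {F : MvPolynomial σ R} (hF : F.IsSymmetric)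
    (hcoeff : ∀ d, coeff d F ∈ Algebra.adjoin K T) :
    F ∈ Algebra.adjoin K (C '' T ∪ Set.range (psum σ R)) := by
  set S := Algebra.adjoin K T
  let _ : Algebra ℚ S := ((algebraMap K S).comp (algebraMap ℚ K)).toAlgebra
  obtain ⟨G, rfl⟩ : F ∈ Set.range (map (S.val : S →+* R)) := by
    rw [mem_range_map_iff_coeffs_subset]
    rintro _ hc
    obtain ⟨d, -, rfl⟩ := mem_coeffs_iff.mp hc
    exact ⟨⟨_, hcoeff d⟩, rfl⟩
  have hG : G ∈ Algebra.adjoin S (Set.range (psum σ S)) := by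
    rw [← symmetricSubalgebra_eq_adjoin_range_psum, mem_symmetricSubalgebra]
    exact fun π => map_injective (S.val : S →+* R) Subtype.val_injective
      (by rw [map_rename, hF π])
  clear hF hcoeff
  induction hG using Algebra.adjoin_induction with
  | mem _ h =>
    obtain ⟨k, rfl⟩ := h
    exact Algebra.subset_adjoin (Or.inr ⟨k, (map_psum _ k).symm⟩)
  | algebraMap s =>
    rw [algebraMap_eq, map_C]
    exact Algebra.adjoin_mono Set.subset_union_left (C_mem_adjoin_C_image s.2)
  | add _ _ _ _ h₁ h₂ => rw [map_add]; exact add_mem h₁ h₂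
  | mul _ _ _ _ h₁ h₂ => rw [map_mul]; exact mul_mem h₁ h₂

theorem sumAlgEquiv_rename_sumMap {K τ σ' τ' : Type*} [CommSemiring K] (f : σ → σ')
    (g : τ → τ') (p : MvPolynomial (σ ⊕ τ) K) :
    sumAlgEquiv K σ' τ' (rename (Sum.map f g) p) =
      map (rename (R := K) g).toRingHom (rename f (sumAlgEquiv K σ τ p)) := by
  induction p using MvPolynomial.induction_on with
  | C a => simp [sumAlgEquiv_C_inl]
  | add p q hp hq => simp only [map_add, hp, hq]
  | mul_X p i hp =>
    rcases i with i | j <;> simp [hp, sumAlgEquiv_X_inl, sumAlgEquiv_X_inr]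

theorem mem_adjoin_psum_inl_union_psum_inr {K τ : Type*} [Field K] [CharZero K] [Fintype σ]
    [Fintype τ] {p : MvPolynomial (σ ⊕ τ) K}
    (hp : ∀ (π : Equiv.Perm σ) (π' : Equiv.Perm τ), rename (Equiv.sumCongr π π') p = p) :
    p ∈ Algebra.adjoin K (Set.range (fun k => rename Sum.inl (psum σ K k)) ∪
      Set.range (fun k => rename Sum.inr (psum τ K k))) := by
  set Φ := sumAlgEquiv K σ τ
  have hF : (Φ p).IsSymmetric := fun π => by
    simpa [Φ, Equiv.sumCongr, sumAlgEquiv_rename_sumMap, map_id] using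
      congrArg Φ (hp π (Equiv.refl τ))
  have hcoeff : ∀ d, coeff d (Φ p) ∈ Algebra.adjoin K (Set.range (psum τ K)) := fun d => by
    rw [← symmetricSubalgebra_eq_adjoin_range_psum, mem_symmetricSubalgebra]
    intro π'
    simpa [Φ, Equiv.sumCongr, sumAlgEquiv_rename_sumMap, coeff_map] using
      congrArg (coeff d ∘ Φ) (hp (Equiv.refl σ) π')
  have hgen : (Φ.symm : _ →ₐ[K] _) '' (C '' Set.range (psum τ K) ∪ Set.range (psum σ _)) ⊆
      (Algebra.adjoin K (Set.range (fun k => rename Sum.inl (psum σ K k)) ∪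
        Set.range (fun k => rename Sum.inr (psum τ K k))) : Set (MvPolynomial (σ ⊕ τ) K)) := by
    rintro _ ⟨_, (⟨_, ⟨k, rfl⟩, rfl⟩ | ⟨k, rfl⟩), rfl⟩
    · refine Algebra.subset_adjoin (Or.inr ⟨k, Φ.injective ?_⟩)
      simpa using AlgHom.congr_fun (sumAlgEquiv_comp_rename_inr K σ τ) (psum τ K k)
    · refine Algebra.subset_adjoin (Or.inl ⟨k, Φ.injective ?_⟩)
      simpa [map_psum] using AlgHom.congr_fun (sumAlgEquiv_comp_rename_inl K σ τ) (psum σ K k)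
  rw [← Φ.symm_apply_apply p]
  refine Algebra.adjoin_le hgen ?_
  rw [Algebra.adjoin_image]
  exact ⟨_, mem_adjoin_C_image_union_range_psum_of_isSymmetric hF hcoeff, rfl⟩

section Blocks

variable {K ι : Type*} (P : ι → Prop) [DecidablePred P]

theorem rename_subtypeVal_psum [Fintype ι] [CommSemiring K] (k : ℕ) :
    rename Subtype.val (psum {i // P i} K k) = ∑ i ∈ univ.filter P, X i ^ k := by
  rw [psum, map_sum, Finset.sum_subtype (univ.filter P) (p := P) (F := inferInstance) (by simp)]
  simp

theorem mem_adjoin_sum_filter_pow_of_rename_eq [Fintype ι] [Field K] [CharZero K]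
    {p : MvPolynomial ι K} (hp : ∀ σ : Equiv.Perm ι, (∀ i, P i ↔ P (σ i)) → rename σ p = p) :
    p ∈ Algebra.adjoin K (Set.range (fun k => ∑ i ∈ univ.filter P, X i ^ k) ∪
      Set.range (fun k => ∑ i ∈ univ.filter (fun i => ¬ P i), X i ^ k)) := by
  set e := Equiv.sumCompl P
  have hsplit : ∀ (π : Equiv.Perm {i // P i}) (π' : Equiv.Perm {i // ¬ P i}),
      rename (Equiv.sumCongr π π') (rename e.symm p) = rename e.symm p := by
    intro π π'
    have hP : ∀ i, P i ↔ P (π.subtypeCongr π' i) := fun i => by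
      by_cases h : P i
      · simp [h, Equiv.Perm.subtypeCongr.left_apply _ _ h, (π ⟨i, h⟩).2]
      · simp [h, Equiv.Perm.subtypeCongr.right_apply _ _ h, (π' ⟨i, h⟩).2]
    conv_rhs => rw [← hp _ hP]
    simp only [rename_rename]
    congr 1
    ext i
    simp [e, Equiv.Perm.subtypeCongr, Equiv.permCongr_apply]
  have hinl : ∀ k, rename e (rename Sum.inl (psum {i // P i} K k)) =
      ∑ i ∈ univ.filter P, X i ^ k := fun k => by
    rw [rename_rename]; exact rename_subtypeVal_psum P k
  have hinr : ∀ k, rename e (rename Sum.inr (psum {i // ¬ P i} K k)) =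
      ∑ i ∈ univ.filter (fun i => ¬ P i), X i ^ k := fun k => by
    rw [rename_rename]; exact rename_subtypeVal_psum (fun i => ¬ P i) k
  have hp' : p = rename e (rename e.symm p) := by
    rw [rename_rename, e.self_comp_symm, rename_id_apply]
  have hgen : rename e '' (Set.range (fun k => rename Sum.inl (psum {i // P i} K k)) ∪
      Set.range (fun k => rename Sum.inr (psum {i // ¬ P i} K k))) =
      Set.range (fun k => ∑ i ∈ univ.filter P, X i ^ k) ∪
        Set.range (fun k => ∑ i ∈ univ.filter (fun i => ¬ P i), X i ^ k) := by
    simp only [Set.image_union, ← Set.range_comp, Function.comp_def, hinl, hinr]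
  rw [← hgen, Algebra.adjoin_image, hp']
  exact ⟨_, mem_adjoin_psum_inl_union_psum_inr hsplit, rfl⟩

theorem coe_adjoin_sum_filter_pow_eq_setOf_rename_eq [Fintype ι] [Field K] [CharZero K]
    {y : ι → MvPolynomial ι K} (hy : Function.Bijective (aeval (R := K) y))
    (hyσ : ∀ σ : Equiv.Perm ι, (∀ i, P i ↔ P (σ i)) → ∀ i, rename σ (y i) = y (σ i)) :
    (Algebra.adjoin K (Set.range (fun k => ∑ i ∈ univ.filter P, y i ^ k) ∪
      Set.range (fun k => ∑ i ∈ univ.filter (fun i => ¬ P i), y i ^ k)) :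
        Set (MvPolynomial ι K)) =
      {p | ∀ σ : Equiv.Perm ι, (∀ i, P i ↔ P (σ i)) → rename σ p = p} := by
  have hcomm : ∀ σ : Equiv.Perm ι, (∀ i, P i ↔ P (σ i)) →
      ∀ u : MvPolynomial ι K, rename σ (aeval y u) = aeval y (rename σ u) := fun σ hσ u => by
    have h : (rename (R := K) σ).comp (aeval y) = (aeval y).comp (rename σ) :=
      algHom_ext fun i => by simp [hyσ σ hσ i]
    exact AlgHom.congr_fun h u
  ext x
  constructor
  · intro hx σ hσ
    refine AlgHom.adjoin_le_equalizer (rename σ) (AlgHom.id K _) ?_ hx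
    rintro _ (⟨k, rfl⟩ | ⟨k, rfl⟩)
    · simp only [AlgHom.id_apply, map_sum, map_pow, hyσ σ hσ]
      exact Finset.sum_filter_comp_perm P hσ (fun i => y i ^ k)
    · simp only [AlgHom.id_apply, map_sum, map_pow, hyσ σ hσ]
      exact Finset.sum_filter_comp_perm (fun i => ¬ P i) (fun i => not_congr (hσ i))
        (fun i => y i ^ k)
  · intro hx
    obtain ⟨p, rfl⟩ := hy.2 x
    have hp : ∀ σ : Equiv.Perm ι, (∀ i, P i ↔ P (σ i)) → rename σ p = p :=
      fun σ hσ => hy.1 (by rw [← hcomm σ hσ, hx σ hσ])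
    have hgen : aeval (R := K) y '' (Set.range (fun k => ∑ i ∈ univ.filter P, X i ^ k) ∪
        Set.range (fun k => ∑ i ∈ univ.filter (fun i => ¬ P i), X i ^ k)) =
        Set.range (fun k => ∑ i ∈ univ.filter P, y i ^ k) ∪
          Set.range (fun k => ∑ i ∈ univ.filter (fun i => ¬ P i), y i ^ k) := by
      simp only [Set.image_union, ← Set.range_comp, Function.comp_def, map_sum, map_pow, aeval_X]
    rw [SetLike.mem_coe, ← hgen, Algebra.adjoin_image]
    exact ⟨p, mem_adjoin_sum_filter_pow_of_rename_eq P hp, rfl⟩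

variable [CommRing K] (c : K)

noncomputable def blockShift : ι → MvPolynomial ι K :=
  fun i => if P i then -X i - C c else X i + C c

theorem rename_blockShift {σ : Equiv.Perm ι} (hσ : ∀ i, P i ↔ P (σ i)) (i : ι) :
    rename σ (blockShift P c i) = blockShift P c (σ i) := by
  by_cases h : P i <;> simp [blockShift, h, ← hσ i]

theorem bijective_aeval_blockShift : Function.Bijective (aeval (R := K) (blockShift P c)) := by
  have hzy : ((aeval fun i => if P i then -X i - C c else X i - C c).comp
      (aeval (blockShift P c))) = AlgHom.id K (MvPolynomial ι K) := by
    ext i : 1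
    by_cases h : P i <;> simp [blockShift, h]
  have hyz : ((aeval (blockShift P c)).comp
      (aeval fun i => if P i then -X i - C c else X i - C c)) =
        AlgHom.id K (MvPolynomial ι K) := by
    ext i : 1
    by_cases h : P i <;> simp [blockShift, h]
  exact Function.bijective_iff_has_inverse.mpr
    ⟨_, fun p => AlgHom.congr_fun hzy p, fun p => AlgHom.congr_fun hyz p⟩

end Blocks

end MvPolynomial

theorem stmt_0_general (L : Type*) [Field L] [CharZero L] (n : ℕ)
    (y : Fin (2 * n) → MvPolynomial (Fin (2 * n)) L)
    (hy : ∀ i, y i = if (i : ℕ) < n then -X i - C ((n : L) / 2) else X i + C ((n : L) / 2))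
    (m mA q r : ℕ → MvPolynomial (Fin (2 * n)) L)
    (hm : ∀ k, m k = ∑ i, (y i) ^ k)
    (hmA : ∀ k, mA k = ∑ i ∈ univ.filter (fun i : Fin (2 * n) => (i : ℕ) < n), (y i - 1) ^ k
      + ∑ i ∈ univ.filter (fun i : Fin (2 * n) => ¬ (i : ℕ) < n), (y i + 1) ^ k)
    (hq : ∀ j, q j = ∑ i ∈ univ.filter (fun i : Fin (2 * n) => (i : ℕ) < n), (y i) ^ j)
    (hr : ∀ j, r j = ∑ i ∈ univ.filter (fun i : Fin (2 * n) => ¬ (i : ℕ) < n), (y i) ^ j)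
    (E Ea : MvPolynomial (Fin (2 * n)) L →ₐ[L] MvPolynomial (Fin (2 * n)) L)
    (hE : ∀ k, E (∑ i, (X i : MvPolynomial (Fin (2 * n)) L) ^ k) = m k)
    (hEa : ∀ k, Ea (∑ i, (X i : MvPolynomial (Fin (2 * n)) L) ^ k) = mA k)
    (A : Subalgebra L (MvPolynomial (Fin (2 * n)) L))
    (hA : A = Algebra.adjoin L
      ((E '' (symmetricSubalgebra (Fin (2 * n)) L : Set (MvPolynomial (Fin (2 * n)) L))) ∪
       (Ea '' (symmetricSubalgebra (Fin (2 * n)) L : Set (MvPolynomial (Fin (2 * n)) L))))) :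
    (∀ j : ℕ, 1 ≤ j → q j ∈ A ∧ r j ∈ A) ∧
    (A : Set (MvPolynomial (Fin (2 * n)) L)) =
      {p | ∀ σ : Equiv.Perm (Fin (2 * n)),
        (∀ i : Fin (2 * n), ((i : ℕ) < n ↔ ((σ i : ℕ) < n))) → rename σ p = p} := by
  have hm' : m = fun k => q k + r k := funext fun k => by
    rw [hm, hq, hr, sum_filter_add_sum_filter_not]
  have hmA' : mA = fun k => ∑ j ∈ range (k + 1), (q j * (-1) ^ (k - j) + r j) * k.choose j :=
    funext fun k => by
      simp only [hmA, hq, hr, sub_eq_add_neg, sum_add_pow_eq_sum_range, ← sum_add_distrib,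
        one_pow, mul_one, add_mul]
  have hA_qr : A = Algebra.adjoin L (Set.range q ∪ Set.range r) := by
    rw [hA, Algebra.adjoin_union, adjoin_image_symmetricSubalgebra,
      adjoin_image_symmetricSubalgebra, ← Algebra.adjoin_union,
      ← Algebra.adjoin_range_add_union_range_binomial q r]
    simp only [psum, hE, hEa, hm', hmA']
  refine ⟨fun j _ => ?_, ?_⟩
  · rw [hA_qr]
    exact ⟨Algebra.subset_adjoin (Or.inl ⟨j, rfl⟩), Algebra.subset_adjoin (Or.inr ⟨j, rfl⟩)⟩
  obtain rfl : y = blockShift (fun i : Fin (2 * n) => (i : ℕ) < n) ((n : L) / 2) := funext hy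
  rw [hA_qr, funext hq, funext hr]
  exact coe_adjoin_sum_filter_pow_eq_setOf_rename_eq _ (bijective_aeval_blockShift _ _)
    (fun _ hσ => rename_blockShift _ _ hσ)

/-- Let `L` be a field of characteristic 0 and `n ≥ 1`. With
`y_i = -x_i - n/2` (`i ≤ n`), `y_{i+n} = x_{i+n} + n/2` in `L[x_1,…,x_{2n}]`, let
`E` (resp. `E_a`) be the algebra map on the ring of symmetric polynomials sending the
power sum `p_k = Σ_{i=1}^{2n} x_i^k` to `m_k = Σ y_i^k` (resp. to
`m_k^a = Σ_{i≤n}(y_i-1)^k + Σ_{i≤n}(y_{i+n}+1)^k`). Then the `L`-subalgebra generated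
by the images of `E` and `E_a` contains all `q_j = Σ_{i≤n} y_i^j` and
`r_j = Σ_{i≤n} y_{i+n}^j` for `j ≥ 1`, and it equals the ring of polynomials invariant
under the subgroup `S_n × S_n` of permutations preserving `{x_1,…,x_n}`. -/
theorem stmt_0 (L : Type*) [Field L] [CharZero L] (n : ℕ) (hn : 1 ≤ n)
    (y : Fin (2 * n) → MvPolynomial (Fin (2 * n)) L)
    (hy : ∀ i, y i = if (i : ℕ) < n then -X i - C ((n : L) / 2) else X i + C ((n : L) / 2))
    (m mA q r : ℕ → MvPolynomial (Fin (2 * n)) L)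
    (hm : ∀ k, m k = ∑ i, (y i) ^ k)
    (hmA : ∀ k, mA k = ∑ i ∈ univ.filter (fun i : Fin (2 * n) => (i : ℕ) < n), (y i - 1) ^ k
      + ∑ i ∈ univ.filter (fun i : Fin (2 * n) => ¬ (i : ℕ) < n), (y i + 1) ^ k)
    (hq : ∀ j, q j = ∑ i ∈ univ.filter (fun i : Fin (2 * n) => (i : ℕ) < n), (y i) ^ j)
    (hr : ∀ j, r j = ∑ i ∈ univ.filter (fun i : Fin (2 * n) => ¬ (i : ℕ) < n), (y i) ^ j)
    (E Ea : MvPolynomial (Fin (2 * n)) L →ₐ[L] MvPolynomial (Fin (2 * n)) L)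
    (hE : ∀ k, E (∑ i, (X i : MvPolynomial (Fin (2 * n)) L) ^ k) = m k)
    (hEa : ∀ k, Ea (∑ i, (X i : MvPolynomial (Fin (2 * n)) L) ^ k) = mA k)
    (A : Subalgebra L (MvPolynomial (Fin (2 * n)) L))
    (hA : A = Algebra.adjoin L
      ((E '' (symmetricSubalgebra (Fin (2 * n)) L : Set (MvPolynomial (Fin (2 * n)) L))) ∪
       (Ea '' (symmetricSubalgebra (Fin (2 * n)) L : Set (MvPolynomial (Fin (2 * n)) L))))) :
    (∀ j : ℕ, 1 ≤ j → q j ∈ A ∧ r j ∈ A) ∧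
    (A : Set (MvPolynomial (Fin (2 * n)) L)) =
      {p | ∀ σ : Equiv.Perm (Fin (2 * n)),
        (∀ i : Fin (2 * n), ((i : ℕ) < n ↔ ((σ i : ℕ) < n))) → rename σ p = p} :=
  stmt_0_general L n y hy m mA q r hm hmA hq hr E Ea hE hEa A hA
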